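/- Let G be a finite abelian group of order n ≥ 5 with enumeration g_0, ..., g_{n-1}, g_0 = 0, and L = {x ∈ ℤ^n : Σ x_i = 0, Σ x_i g_i = 0}. Then L is generated by its vectors of minimal nonzero norm (which equals 2); in particular L is well-rounded, i.e., its minimal vectors span the (n−1)-dimensional real space {v ∈ ℝ^n : Σ v_i = 0}. -/

import Mathlib

/-!
Write `δ h = e_{g⁻¹ h} - e_{g⁻¹ 0}`. A vector `x` with coordinate sum zero equals `∑ xᵢ • δ (g i)`,
so the lattice lies in a subgroup `R` as soon as `h ↦ δ h` is additive modulo `R`, i.e. as soon as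
`R` contains every cocycle `δ h + δ h' - δ (h + h')`. When `0, h, h', h + h'` are distinct, this
cocycle is `e_a + e_b - e_c - e_d`, itself a lattice vector of norm 2; the degenerate pairs
`(h, -h)` and `(h, h)` reduce to such pairs through the cocycle identity and an auxiliary `t`
avoiding at most four values, which is where `|G| ≥ 5` enters.

Minimality: `∑ xᵢ² ≡ ∑ xᵢ = 0 (mod 2)`, and squared norm 2 would force `x = eᵢ - eⱼ`, i.e.
`g i = g j`. Finally `|G| • δ h` lies in the lattice, so the real span of the minimal vectors
contains every `eᵢ - e_{g⁻¹ 0}`, hence the whole hyperplane.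
-/

open Finset Function

variable {ι G : Type*} [AddCommGroup G]

theorem even_sum_sq_of_sum_eq_zero {s : Finset ι} {x : ι → ℤ} (h : ∑ i ∈ s, x i = 0) :
    Even (∑ i ∈ s, x i ^ 2) := by
  have : ∑ i ∈ s, x i ^ 2 = ∑ i ∈ s, x i * (x i - 1) := by
    simp only [mul_sub, mul_one, sum_sub_distrib, h, sub_zero, sq]
  rw [this]
  exact even_sum _ fun i _ => Int.even_mul_pred_self (x i)

theorem exists_notMem_of_card_lt {α : Type*} [Fintype α] {s : Finset α}
    (hs : #s < Fintype.card α) : ∃ t, t ∉ s := by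
  obtain ⟨t, -, ht⟩ := exists_mem_notMem_of_card_lt_card (t := univ) (by simpa using hs)
  exact ⟨t, ht⟩

theorem intCast_mem_span_of_mem_closure {K : Type*} [Ring K] {s : Set (ι → ℤ)} {x : ι → ℤ}
    (hx : x ∈ AddSubgroup.closure s) :
    (fun i => (x i : K)) ∈ Submodule.span K ((fun y : ι → ℤ => fun i => (y i : K)) '' s) :=
  (AddSubgroup.closure_le ((Submodule.span K _).toAddSubgroup.comap
    ((Int.castAddHom K).compLeft ι))).2
    (fun _ hy => Submodule.subset_span (Set.mem_image_of_mem _ hy)) hx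

section UnitDiff

variable [DecidableEq ι] (g : ι ≃ G)

def unitDiff (h : G) : ι → ℤ :=
  Pi.single (g.symm h) 1 - Pi.single (g.symm 0) 1

def unitDiffCocycle (h h' : G) : ι → ℤ :=
  unitDiff g h + unitDiff g h' - unitDiff g (h + h')

theorem unitDiff_zero : unitDiff g 0 = 0 :=
  sub_self _

theorem unitDiffCocycle_comm (h h' : G) : unitDiffCocycle g h h' = unitDiffCocycle g h' h := by
  simp only [unitDiffCocycle, add_comm]

theorem unitDiffCocycle_zero_left (h : G) : unitDiffCocycle g 0 h = 0 := by
  simp [unitDiffCocycle, unitDiff_zero]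

theorem unitDiffCocycle_add_unitDiffCocycle (a b c : G) :
    unitDiffCocycle g a b + unitDiffCocycle g (a + b) c =
      unitDiffCocycle g b c + unitDiffCocycle g a (b + c) := by
  simp only [unitDiffCocycle, add_assoc]
  abel

end UnitDiff

variable [Fintype ι]

theorem exists_pos_of_sum_eq_zero {M : Type*} [AddCommMonoid M] [LinearOrder M]
    [IsOrderedAddMonoid M] {x : ι → M} (h : ∑ i, x i = 0) (hx : x ≠ 0) : ∃ i, 0 < x i := by
  by_contra! hle
  exact hx (funext fun i => (sum_eq_zero_iff_of_nonpos fun i _ => hle i).1 h i (mem_univ i))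

theorem sum_smul_single_sub_single [DecidableEq ι] {R : Type*} [Ring R] {x : ι → R}
    (hx : ∑ i, x i = 0) (j : ι) : ∑ i, x i • (Pi.single i 1 - Pi.single j 1 : ι → R) = x := by
  rw [sum_congr rfl fun i _ => smul_sub _ _ _, sum_sub_distrib, ← sum_smul, hx, zero_smul, sub_zero,
    ← pi_eq_sum_univ']

theorem sum_sq_single_add_single_sub_single_sub_single [DecidableEq ι] {a b c d : ι}
    (hab : a ≠ b) (hac : a ≠ c) (had : a ≠ d) (hbc : b ≠ c) (hbd : b ≠ d) (hcd : c ≠ d) :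
    ∑ i, ((Pi.single a 1 + Pi.single b 1 - Pi.single c 1 - Pi.single d 1 : ι → ℤ) i) ^ 2 = 4 := by
  have hsq : ∀ i, ((Pi.single a 1 + Pi.single b 1 - Pi.single c 1 - Pi.single d 1 : ι → ℤ) i) ^ 2
      = (Pi.single a 1 + Pi.single b 1 + Pi.single c 1 + Pi.single d 1 : ι → ℤ) i := by
    intro i
    simp only [Pi.sub_apply, Pi.add_apply, Pi.single_apply]
    split_ifs <;> simp_all
  simp only [hsq, Pi.add_apply, sum_add_distrib, Finset.sum_pi_single']
  norm_num

theorem two_le_sqrt_sum_intCast_sq_iff (x : ι → ℤ) :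
    2 ≤ √(∑ i, (x i : ℝ) ^ 2) ↔ 4 ≤ ∑ i, x i ^ 2 := by
  rw [Real.le_sqrt zero_le_two (by positivity)]
  exact_mod_cast Iff.rfl

theorem sqrt_sum_intCast_sq_eq_two_iff (x : ι → ℤ) :
    √(∑ i, (x i : ℝ) ^ 2) = 2 ↔ ∑ i, x i ^ 2 = 4 := by
  rw [Real.sqrt_eq_iff_eq_sq (by positivity) zero_le_two]
  exact_mod_cast Iff.rfl

def relationLattice (g : ι → G) : AddSubgroup (ι → ℤ) where
  carrier := {x | ∑ i, x i = 0 ∧ ∑ i, x i • g i = 0}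
  add_mem' {x y} hx hy := by
    simp only [Set.mem_ofPred_eq, Pi.add_apply, add_smul, sum_add_distrib] at *
    simp [hx.1, hx.2, hy.1, hy.2]
  zero_mem' := by simp
  neg_mem' {x} hx := by simpa [neg_smul, sum_neg_distrib] using hx

theorem mem_relationLattice {g : ι → G} {x : ι → ℤ} :
    x ∈ relationLattice g ↔ ∑ i, x i = 0 ∧ ∑ i, x i • g i = 0 :=
  Iff.rfl

def normTwoVectors (g : ι → G) : Set (ι → ℤ) :=
  {x | x ∈ relationLattice g ∧ ∑ i, x i ^ 2 = 4}

theorem four_le_sum_sq_of_mem_relationLattice [DecidableEq ι] {g : ι → G} (hg : Injective g)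
    {x : ι → ℤ} (hx : x ∈ relationLattice g) (hx0 : x ≠ 0) : 4 ≤ ∑ i, x i ^ 2 := by
  obtain ⟨hsum, hrel⟩ := hx
  obtain ⟨i, hi⟩ := exists_pos_of_sum_eq_zero hsum hx0
  obtain ⟨j, hj⟩ : ∃ j, 0 < -x j :=
    exists_pos_of_sum_eq_zero (x := -x) (by simp [hsum]) (neg_ne_zero.2 hx0)
  have hij : i ≠ j := by rintro rfl; omega
  have hsplit : ∑ k, x k ^ 2 = x i ^ 2 + x j ^ 2 + ∑ k ∈ (univ.erase i).erase j, x k ^ 2 := by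
    rw [add_assoc, add_sum_erase _ (fun k => x k ^ 2) (mem_erase.2 ⟨hij.symm, mem_univ j⟩),
      add_sum_erase _ (fun k => x k ^ 2) (mem_univ i)]
  have hrest : 0 ≤ ∑ k ∈ (univ.erase i).erase j, x k ^ 2 := sum_nonneg fun k _ => sq_nonneg _
  have hi2 : 1 ≤ x i ^ 2 := by nlinarith
  have hj2 : 1 ≤ x j ^ 2 := by nlinarith
  obtain ⟨m, hm⟩ := even_sum_sq_of_sum_eq_zero hsum
  by_contra hlt
  have hrest0 : ∑ k ∈ (univ.erase i).erase j, x k ^ 2 = 0 := by omega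
  have hxi : x i = 1 := by nlinarith
  have hxj : x j = -1 := by nlinarith
  have hsupp : ∀ k, k ≠ i ∧ k ≠ j → x k = 0 := fun k hk =>
    pow_eq_zero_iff two_ne_zero |>.1 <|
      (sum_eq_zero_iff_of_nonneg fun k _ => sq_nonneg (x k)).1 hrest0 k (by simp [hk.1, hk.2])
  rw [Fintype.sum_eq_add i j hij fun k hk => by rw [hsupp k hk, zero_smul], hxi, hxj, one_smul,
    neg_one_smul, ← sub_eq_add_neg, sub_eq_zero] at hrel
  exact hij (hg hrel)

section UnitDiff

variable [DecidableEq ι] (g : ι ≃ G)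

theorem sum_unitDiff (h : G) : ∑ i, unitDiff g h i = 0 := by
  simp [unitDiff, sum_sub_distrib]

theorem sum_unitDiff_smul (h : G) : ∑ i, unitDiff g h i • g i = h := by
  simp [unitDiff, sub_smul, sum_sub_distrib, Pi.single_apply, ite_smul]

theorem sum_smul_unitDiff_eq_self {x : ι → ℤ} (hx : ∑ i, x i = 0) :
    ∑ i, x i • unitDiff g (g i) = x := by
  simpa [unitDiff] using sum_smul_single_sub_single hx (g.symm 0)

theorem card_nsmul_unitDiff_mem_relationLattice [Fintype G] (h : G) :
    Fintype.card G • unitDiff g h ∈ relationLattice g := by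
  constructor
  · simp only [Pi.smul_apply, ← smul_sum, sum_unitDiff, smul_zero]
  · simp only [Pi.smul_apply, smul_assoc, card_nsmul_eq_zero, sum_const_zero]

theorem unitDiffCocycle_mem_relationLattice (h h' : G) :
    unitDiffCocycle g h h' ∈ relationLattice g := by
  simp [mem_relationLattice, unitDiffCocycle, sum_add_distrib, sum_sub_distrib, add_smul, sub_smul,
    sum_unitDiff, sum_unitDiff_smul]

theorem unitDiffCocycle_mem_normTwoVectors {h h' : G} (h0 : h ≠ 0) (h0' : h' ≠ 0) (hh' : h ≠ h')
    (hs : h + h' ≠ 0) : unitDiffCocycle g h h' ∈ normTwoVectors g := by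
  refine ⟨unitDiffCocycle_mem_relationLattice g h h', ?_⟩
  have hinj {a b : G} : a ≠ b → g.symm a ≠ g.symm b := g.symm.injective.ne
  have : unitDiffCocycle g h h' = Pi.single (g.symm h) 1 + Pi.single (g.symm h') 1
      - Pi.single (g.symm (h + h')) 1 - Pi.single (g.symm 0) 1 := by
    simp only [unitDiffCocycle, unitDiff]
    abel
  rw [this]
  exact sum_sq_single_add_single_sub_single_sub_single (hinj hh') (hinj (by simpa using h0'))
    (hinj h0) (hinj (by simpa using h0)) (hinj h0') (hinj hs)

theorem relationLattice_le_of_unitDiffCocycle_mem {R : AddSubgroup (ι → ℤ)}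
    (hR : ∀ h h', unitDiffCocycle g h h' ∈ R) : relationLattice g ≤ R := by
  let φ : G →+ (ι → ℤ) ⧸ R := AddMonoidHom.mk' (fun h => (unitDiff g h : (ι → ℤ) ⧸ R))
    fun a b => by
      rw [← QuotientAddGroup.mk_add, QuotientAddGroup.eq]
      convert hR a b using 1
      simp only [unitDiffCocycle]
      abel
  intro x ⟨hsum, hrel⟩
  rw [← QuotientAddGroup.eq_zero_iff, ← sum_smul_unitDiff_eq_self g hsum]
  calc ((∑ i, x i • unitDiff g (g i) : ι → ℤ) : (ι → ℤ) ⧸ R)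
      = φ (∑ i, x i • g i) := by simp [φ, map_sum, map_zsmul]
    _ = 0 := by rw [hrel, map_zero]

end UnitDiff

section Closure

variable [DecidableEq ι] [DecidableEq G] [Fintype G] (g : ι ≃ G) (hG : 5 ≤ Fintype.card G)
include hG

theorem unitDiffCocycle_neg_mem_closure {h : G} (h0 : h ≠ 0) :
    unitDiffCocycle g h (-h) ∈ AddSubgroup.closure (normTwoVectors g) := by
  obtain ⟨t, ht⟩ := exists_notMem_of_card_lt (s := {0, h, -h, -h - h})
    (card_le_four.trans_lt (by omega))
  simp only [mem_insert, mem_singleton, not_or] at ht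
  obtain ⟨ht0, hth, htn, ht2⟩ := ht
  have key := unitDiffCocycle_add_unitDiffCocycle g (-h) h t
  rw [neg_add_cancel, unitDiffCocycle_zero_left, add_zero, unitDiffCocycle_comm] at key
  have hht : h + t ≠ 0 := fun e => htn (eq_neg_of_add_eq_zero_right e)
  rw [key]
  refine add_mem (AddSubgroup.subset_closure ?_) (AddSubgroup.subset_closure ?_)
  · exact unitDiffCocycle_mem_normTwoVectors g h0 ht0 (Ne.symm hth) hht
  · exact unitDiffCocycle_mem_normTwoVectors g (neg_ne_zero.2 h0) hht
      (fun e => ht2 (by rw [e]; abel)) (by simpa using ht0)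

theorem unitDiffCocycle_mem_closure_of_ne {h h' : G} (hh' : h ≠ h') :
    unitDiffCocycle g h h' ∈ AddSubgroup.closure (normTwoVectors g) := by
  rcases eq_or_ne h 0 with rfl | h0
  · simp [unitDiffCocycle_zero_left]
  rcases eq_or_ne h' 0 with rfl | h0'
  · simp [unitDiffCocycle_comm g h 0, unitDiffCocycle_zero_left]
  rcases eq_or_ne (h + h') 0 with hs | hs
  · rw [eq_neg_of_add_eq_zero_right hs]
    exact unitDiffCocycle_neg_mem_closure g hG h0
  · exact AddSubgroup.subset_closure (unitDiffCocycle_mem_normTwoVectors g h0 h0' hh' hs)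

theorem unitDiffCocycle_self_mem_closure (h : G) :
    unitDiffCocycle g h h ∈ AddSubgroup.closure (normTwoVectors g) := by
  obtain ⟨t, ht⟩ := exists_notMem_of_card_lt (s := {0, h, h + h})
    (card_le_three.trans_lt (by omega))
  simp only [mem_insert, mem_singleton, not_or] at ht
  obtain ⟨ht0, hth, ht2⟩ := ht
  rw [eq_sub_of_add_eq (unitDiffCocycle_add_unitDiffCocycle g h h t)]
  refine sub_mem (add_mem ?_ ?_) ?_
  · exact unitDiffCocycle_mem_closure_of_ne g hG (Ne.symm hth)
  · exact unitDiffCocycle_mem_closure_of_ne g hG (by simpa using ht0)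
  · exact unitDiffCocycle_mem_closure_of_ne g hG (Ne.symm ht2)

theorem unitDiffCocycle_mem_closure (h h' : G) :
    unitDiffCocycle g h h' ∈ AddSubgroup.closure (normTwoVectors g) := by
  rcases eq_or_ne h h' with rfl | hh'
  · exact unitDiffCocycle_self_mem_closure g hG h
  · exact unitDiffCocycle_mem_closure_of_ne g hG hh'

theorem closure_normTwoVectors : AddSubgroup.closure (normTwoVectors g) = relationLattice g :=
  le_antisymm ((AddSubgroup.closure_le _).2 fun _ hx => hx.1)
    (relationLattice_le_of_unitDiffCocycle_mem g (unitDiffCocycle_mem_closure g hG))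

theorem span_intCast_normTwoVectors (K : Type*) [Field K] [CharZero K] :
    (Submodule.span K ((fun x : ι → ℤ => fun i => (x i : K)) '' normTwoVectors g) : Set (ι → K)) =
      {v | ∑ i, v i = 0} := by
  set S := Submodule.span K ((fun x : ι → ℤ => fun i => (x i : K)) '' normTwoVectors g)
  apply subset_antisymm
  · have hS : S ≤ LinearMap.ker (∑ i, LinearMap.proj i : (ι → K) →ₗ[K] K) := by
      refine Submodule.span_le.2 ?_
      rintro _ ⟨x, ⟨⟨hsum, -⟩, -⟩, rfl⟩
      simpa using congrArg (Int.cast : ℤ → K) hsum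
    intro v hv
    simpa using hS hv
  · intro v hv
    rw [← sum_smul_single_sub_single hv (g.symm 0)]
    refine S.sum_mem fun i _ => ?_
    have hcast := intCast_mem_span_of_mem_closure (K := K)
      ((closure_normTwoVectors g hG).symm ▸ card_nsmul_unitDiff_mem_relationLattice g (g i))
    have hcard : (Fintype.card G : K) ≠ 0 := Nat.cast_ne_zero.2 Fintype.card_ne_zero
    convert S.smul_mem (v i * (Fintype.card G : K)⁻¹) hcast using 1
    ext j
    simp only [unitDiff, Equiv.symm_apply_apply, Pi.smul_apply, Pi.sub_apply, Pi.single_apply]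
    split_ifs <;> field_simp <;> simp

end Closure

/-- For `G` finite abelian of order `n ≥ 5` with enumeration `g`,
`g 0 = 0`, the lattice `L = {x ∈ ℤ^n : ∑ x i = 0, ∑ x i • g i = 0}` has minimal
nonzero norm `2`, is generated by its norm-`2` vectors, and is well-rounded:
the real span of its minimal vectors is the hyperplane `{v : ∑ v i = 0}`. -/
theorem stmt_10 (n : ℕ) (hn : 5 ≤ n) (G : Type) [AddCommGroup G] [Fintype G]
    (hcard : Fintype.card G = n) (g : Fin n ≃ G)
    (L : AddSubgroup (Fin n → ℤ))
    (hL : ∀ x, x ∈ L ↔ (∑ i, x i = 0 ∧ ∑ i, x i • g i = 0))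
    (M : Set (Fin n → ℤ))
    (hM : M = {x | x ∈ L ∧ Real.sqrt (∑ i, ((x i : ℝ)) ^ 2) = 2}) :
    (∀ x ∈ L, x ≠ 0 → 2 ≤ Real.sqrt (∑ i, ((x i : ℝ)) ^ 2)) ∧
    AddSubgroup.closure M = L ∧
    (Submodule.span ℝ ((fun x : Fin n → ℤ => fun i => ((x i : ℝ))) '' M) : Set (Fin n → ℝ)) =
      {v : Fin n → ℝ | ∑ i, v i = 0} := by
  classical
  obtain rfl : L = relationLattice g := AddSubgroup.ext hL
  obtain rfl : M = normTwoVectors g := by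
    simp only [hM, sqrt_sum_intCast_sq_eq_two_iff]
    rfl
  refine ⟨fun x hx hx0 => ?_, closure_normTwoVectors g (hcard ▸ hn),
    span_intCast_normTwoVectors g (hcard ▸ hn) ℝ⟩
  rw [two_le_sqrt_sum_intCast_sq_iff]
  exact four_le_sum_sq_of_mem_relationLattice g.injective hx hx0
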